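/- Let A = (A₁,…,A_n) be a toric system on a surface X with A_k² = -2 for some k. Then the transposed sequence perm_k(A), defined by replacing (A_{k-1}, A_k, A_{k+1}) with (A_{k-1}+A_k, -A_k, A_k+A_{k+1}) (indices mod n, with the stated conventions at k = 1 and k = n), is again a toric system on X, and (perm_k(A))_i² = A_i² for all i after the appropriate reindexing (i.e. the sequence of self-intersections is unchanged). -/

import Mathlib

/-!
Since `A_k² = -2`, the reflection `s x = x + (A_k · x) A_k` is an isometry of the intersection
form, and the toric-system relations give `perm_k(A) = s ∘ A`. An isometry preserves all
intersection numbers, and `s` fixes `K` because `A_k · K = -A_k · (A_{k-1} + A_k + A_{k+1}) = 0`.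
-/

open Finset Function

theorem Int.not_dvd_of_pos_of_lt {m n : ℤ} (h0 : 0 < m) (hmn : m < n) : ¬ n ∣ m :=
  fun h => hmn.not_ge (Int.le_of_dvd h0 h)

theorem Function.Periodic.eq_of_dvd_sub {α : Type*} {f : ℤ → α} {c : ℤ} (hf : Periodic f c)
    {i j : ℤ} (h : c ∣ i - j) : f i = f j := by
  obtain ⟨m, hm⟩ := h
  rw [show i = j + m * c by linarith]
  exact hf.int_mul m j

theorem Function.Periodic.sum_range_comp_add {M : Type*} [AddCancelCommMonoid M] {f : ℤ → M}
    {n : ℕ} (hf : Periodic f n) (a : ℤ) : ∑ i ∈ range n, f (a + i) = ∑ i ∈ range n, f i := by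
  have step (b : ℤ) : ∑ i ∈ range n, f (b + 1 + i) = ∑ i ∈ range n, f (b + i) := by
    have h := (sum_range_succ' (fun i : ℕ => f (b + i)) n).symm.trans
      (sum_range_succ (fun i : ℕ => f (b + i)) n)
    simp only [Nat.cast_add, Nat.cast_one, Nat.cast_zero, add_zero, hf b] at h
    simpa only [add_assoc, add_comm (1 : ℤ)] using add_right_cancel h
  induction a using Int.induction_on with
  | zero => simp
  | succ m ih => rw [step, ih]
  | pred m ih => rw [← ih, ← step, sub_add_cancel]

section Reflection

variable {R M : Type*} [CommRing R] [AddCommGroup M] [Module R M] {β : M →ₗ[R] M →ₗ[R] R} {a : M}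

theorem Module.reflection_neg_apply (h : (-β a) a = 2) (x : M) :
    Module.reflection h x = x + β a x • a := by
  simp [Module.reflection_apply]

theorem Module.apply_reflection_reflection_of_neg (hβ : ∀ x y, β x y = β y x)
    (h : (-β a) a = 2) (x y : M) :
    β (Module.reflection h x) (Module.reflection h y) = β x y := by
  have haa : β a a = -2 := by rw [LinearMap.neg_apply, neg_eq_iff_eq_neg] at h; exact h
  simp only [Module.reflection_neg_apply, map_add, map_smul, LinearMap.add_apply,
    LinearMap.smul_apply, smul_eq_mul, haa, hβ x a]
  ring

end Reflection

structure IsToricSystem {Pic : Type*} [AddCommGroup Pic] (inter : Pic →ₗ[ℤ] Pic →ₗ[ℤ] ℤ)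
    (K : Pic) (n : ℕ) (A : ℤ → Pic) : Prop where
  adj : ∀ i : ℤ, inter (A i) (A (i + 1)) = 1
  orth : ∀ i j : ℤ, ¬((n : ℤ) ∣ j - i) → ¬((n : ℤ) ∣ j - i - 1) → ¬((n : ℤ) ∣ j - i + 1) →
    inter (A i) (A j) = 0
  sum_eq : ∑ i ∈ range n, A i = -K

namespace IsToricSystem

variable {Pic : Type*} [AddCommGroup Pic] {inter : Pic →ₗ[ℤ] Pic →ₗ[ℤ] ℤ} {K : Pic} {n : ℕ}
  {A : ℤ → Pic}

theorem map {F : Type*} [FunLike F Pic Pic] [AddMonoidHomClass F Pic Pic]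
    (hA : IsToricSystem inter K n A) {σ : F} (hσ : ∀ x y, inter (σ x) (σ y) = inter x y)
    (hσK : σ K = K) : IsToricSystem inter K n (σ ∘ A) where
  adj i := by simpa only [comp_apply, hσ] using hA.adj i
  orth i j h₀ h₁ h₂ := by simpa only [comp_apply, hσ] using hA.orth i j h₀ h₁ h₂
  sum_eq := by simp only [comp_apply, ← map_sum, hA.sum_eq, map_neg, hσK]

theorem adj_pred (hA : IsToricSystem inter K n A) (hsymm : ∀ a b, inter a b = inter b a) (k : ℤ) :
    inter (A k) (A (k - 1)) = 1 := by
  simpa [hsymm (A k)] using hA.adj (k - 1)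

theorem inter_canonical_eq_zero (hA : IsToricSystem inter K n A)
    (hsymm : ∀ a b, inter a b = inter b a) (hAper : Periodic A n) (hn : 3 ≤ n) {k : ℤ}
    (hk : inter (A k) (A k) = -2) : inter (A k) K = 0 := by
  obtain ⟨m, rfl⟩ := Nat.exists_eq_add_of_le hn
  have hper : Periodic (fun i => inter (A k) (A i)) (3 + m : ℕ) := fun i =>
    congrArg (inter (A k)) (hAper i)
  have hfar (x : ℕ) (hx : x ∈ range m) : inter (A k) (A (k - 1 + (3 + x : ℕ))) = 0 := by
    rw [mem_range] at hx
    refine hA.orth k _ (Int.not_dvd_of_pos_of_lt ?_ ?_) (Int.not_dvd_of_pos_of_lt ?_ ?_)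
      (Int.not_dvd_of_pos_of_lt ?_ ?_) <;> push_cast <;> omega
  have hprev := hA.adj_pred hsymm k
  have hnext : inter (A k) (A (k - 1 + 2)) = 1 := by
    rw [show k - 1 + 2 = k + 1 by ring]; exact hA.adj k
  have hsum : ∑ i ∈ range (3 + m), inter (A k) (A i) = 0 := by
    rw [← hper.sum_range_comp_add (k - 1), sum_range_add, sum_eq_zero hfar]
    simp [sum_range_succ, hprev, hk, hnext]
  rw [← neg_neg K, ← hA.sum_eq, map_neg, map_sum, hsum, neg_zero]

theorem eq_reflection_apply (hA : IsToricSystem inter K n A)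
    (hsymm : ∀ a b, inter a b = inter b a) (hAper : Periodic A n) {k : ℤ}
    (h2 : (-inter (A k)) (A k) = 2) {B : ℤ → Pic} (hBper : Periodic B n)
    (hBprev : B (k - 1) = A (k - 1) + A k) (hBk : B k = -A k)
    (hBnext : B (k + 1) = A k + A (k + 1))
    (hBrest : ∀ i : ℤ, ¬((n : ℤ) ∣ i - (k - 1)) → ¬((n : ℤ) ∣ i - k) →
      ¬((n : ℤ) ∣ i - (k + 1)) → B i = A i) (i : ℤ) :
    B i = Module.reflection h2 (A i) := by
  have hprev := hA.adj_pred hsymm k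
  by_cases h₁ : (n : ℤ) ∣ i - (k - 1)
  · rw [hBper.eq_of_dvd_sub h₁, hAper.eq_of_dvd_sub h₁, hBprev, Module.reflection_neg_apply,
      hprev, one_smul]
  by_cases h₂ : (n : ℤ) ∣ i - k
  · rw [hBper.eq_of_dvd_sub h₂, hAper.eq_of_dvd_sub h₂, hBk, Module.reflection_apply_self]
  by_cases h₃ : (n : ℤ) ∣ i - (k + 1)
  · rw [hBper.eq_of_dvd_sub h₃, hAper.eq_of_dvd_sub h₃, hBnext, Module.reflection_neg_apply,
      hA.adj k, one_smul, add_comm]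
  have hfar : inter (A k) (A i) = 0 := hA.orth k i h₂ (by rwa [sub_sub]) (by rwa [sub_add])
  rw [hBrest i h₁ h₂ h₃, Module.reflection_neg_apply, hfar, zero_smul, add_zero]

end IsToricSystem

/-- Let `A = (A₁,…,A_n)` be a toric system on a surface `X`
(encoded as an `n`-periodic sequence `A : ℤ → Pic`) with `A_k² = -2`.
Then the transposed sequence `perm_k(A)` — the `n`-periodic sequence `B`
with `B_{k-1} = A_{k-1} + A_k`, `B_k = -A_k`, `B_{k+1} = A_k + A_{k+1}`
and `B_i = A_i` for all other `i` (this uniform cyclic description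
incorporates the stated conventions at `k = 1` and `k = n`) — is again a
toric system on `X`, with the same sequence of self-intersections:
`Bᵢ² = Aᵢ²` for all `i`. -/
theorem transposition_is_toric_system {Pic : Type*} [AddCommGroup Pic]
    (inter : Pic →ₗ[ℤ] Pic →ₗ[ℤ] ℤ)
    (hsymm : ∀ a b : Pic, inter a b = inter b a)
    (K : Pic) (n : ℕ) (hn : 3 ≤ n)
    (A : ℤ → Pic)
    (hAper : ∀ i : ℤ, A (i + n) = A i)
    (hAadj : ∀ i : ℤ, inter (A i) (A (i + 1)) = 1)
    (hAorth : ∀ i j : ℤ, ¬((n : ℤ) ∣ j - i) → ¬((n : ℤ) ∣ j - i - 1) →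
      ¬((n : ℤ) ∣ j - i + 1) → inter (A i) (A j) = 0)
    (hAsum : ∑ i ∈ Finset.range n, A (i : ℤ) = -K)
    (k : ℤ) (hk : inter (A k) (A k) = -2)
    (B : ℤ → Pic)
    (hBper : ∀ i : ℤ, B (i + n) = B i)
    (hBprev : B (k - 1) = A (k - 1) + A k)
    (hBk : B k = -A k)
    (hBnext : B (k + 1) = A k + A (k + 1))
    (hBrest : ∀ i : ℤ, ¬((n : ℤ) ∣ i - (k - 1)) → ¬((n : ℤ) ∣ i - k) →
      ¬((n : ℤ) ∣ i - (k + 1)) → B i = A i) :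
    (∀ i : ℤ, inter (B i) (B (i + 1)) = 1) ∧
    (∀ i j : ℤ, ¬((n : ℤ) ∣ j - i) → ¬((n : ℤ) ∣ j - i - 1) →
      ¬((n : ℤ) ∣ j - i + 1) → inter (B i) (B j) = 0) ∧
    (∑ i ∈ Finset.range n, B (i : ℤ) = -K) ∧
    (∀ i : ℤ, inter (B i) (B i) = inter (A i) (A i)) := by
  have hA : IsToricSystem inter K n A := ⟨hAadj, hAorth, hAsum⟩
  have h2 : (-inter (A k)) (A k) = 2 := by rw [LinearMap.neg_apply, hk, neg_neg]
  have hσ := Module.apply_reflection_reflection_of_neg hsymm h2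
  have hσK : Module.reflection h2 K = K := by
    rw [Module.reflection_neg_apply, hA.inter_canonical_eq_zero hsymm hAper hn hk, zero_smul,
      add_zero]
  have hB : B = Module.reflection h2 ∘ A :=
    funext (hA.eq_reflection_apply hsymm hAper h2 hBper hBprev hBk hBnext hBrest)
  subst hB
  obtain ⟨hadj, horth, hsum⟩ := hA.map hσ hσK
  exact ⟨hadj, horth, hsum, fun i => hσ (A i) (A i)⟩
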